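/- (Bapat–Sunder Hadamard majorization lemma.) Let A and B be N×N Hermitian complex matrices. If A is positive semidefinite and every diagonal entry of A equals 1, then the eigenvalue vector of the Hadamard product A∘B is majorized by the eigenvalue vector of B: λ(A∘B) ≺ λ(B). -/

import Mathlib

open Matrix BigOperators
open scoped ComplexOrder

/-- The sum of the `k` largest entries of `x`, expressed as the supremum of the
sums of `x` over all subsets of cardinality `k`. -/
noncomputable def kMaxSum {N : ℕ} (x : Fin N → ℝ) (k : ℕ) : ℝ :=
  sSup ((fun A : Finset (Fin N) => ∑ i ∈ A, x i) '' {A : Finset (Fin N) | A.card = k})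

/-- `x` is majorized by `y` (`x ≺ y`): every partial sum of the `k` largest
entries of `x` is at most the corresponding sum for `y`, and the total sums
coincide. -/
def MajorizedBy {N : ℕ} (x y : Fin N → ℝ) : Prop :=
  (∀ k, k ≤ N → kMaxSum x k ≤ kMaxSum y k) ∧ (∑ i, x i = ∑ i, y i)

/-!
The traces of `A ∘ B` and `B` agree because `A` has unit diagonal. For the partial sums we use
Ky Fan's principle: for Hermitian `H` and `0 ≤ X ≤ 1` with `tr X = k`, `re tr (X H)` is a
combination of the eigenvalues of `H` with weights in `[0, 1]` summing to `k`, hence at most a sum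
of `k` of them; conversely a spectral projection attains any prescribed sum of `k` eigenvalues.
The map `P ↦ Aᵀ ∘ P` preserves `0 ≤ P ≤ 1` (Schur product theorem, and `Aᵀ ∘ 1 = 1`) and the
trace, and it is the trace dual of `B ↦ A ∘ B`. So a sum of `k` eigenvalues of `A ∘ B`, written as
`tr (P (A ∘ B))` for a spectral projection `P`, equals `tr ((Aᵀ ∘ P) B)`, which is at most the sum
of the `k` largest eigenvalues of `B`.
-/

open Finset

section Threshold

variable {ι : Type*} [Fintype ι]

theorem Finset.exists_card_eq_threshold (β : ι → ℝ) {k : ℕ} (hk : k ≤ Fintype.card ι) :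
    ∃ T : Finset ι, #T = k ∧ ∃ c, (∀ i ∈ T, c ≤ β i) ∧ ∀ j ∉ T, β j ≤ c := by
  classical
  induction k with
  | zero =>
    obtain ⟨c, hc⟩ := (Set.finite_range β).bddAbove
    exact ⟨∅, card_empty, c, by simp, fun j _ => hc ⟨j, rfl⟩⟩
  | succ k ih =>
    obtain ⟨T, hTk, c, hTc, hcT⟩ := ih (by omega)
    have hne : Tᶜ.Nonempty := by
      rw [← card_pos, card_compl]
      omega
    obtain ⟨j₀, hj₀, hmax⟩ := exists_max_image Tᶜ β hne
    refine ⟨insert j₀ T, ?_, β j₀, ?_, ?_⟩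
    · rw [card_insert_of_notMem (mem_compl.mp hj₀), hTk]
    · simp only [mem_insert, forall_eq_or_imp, le_refl, true_and]
      exact fun i hi => (hcT j₀ (mem_compl.mp hj₀)).trans (hTc i hi)
    · exact fun j hj => hmax j (mem_compl.mpr fun h => hj (mem_insert_of_mem h))

theorem Finset.sum_mul_le_sum_of_threshold {β t : ι → ℝ} {T : Finset ι} {c : ℝ}
    (hTc : ∀ i ∈ T, c ≤ β i) (hcT : ∀ j ∉ T, β j ≤ c)
    (ht₀ : ∀ j, 0 ≤ t j) (ht₁ : ∀ j, t j ≤ 1) (ht : ∑ j, t j = #T) :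
    ∑ j, t j * β j ≤ ∑ i ∈ T, β i := by
  classical
  -- `(t j - 𝟙_T j) * (β j - c) ≤ 0` termwise, and the `c`-parts sum to zero
  have hterm : ∀ j, t j * β j ≤
      (if j ∈ T then β j else 0) + (t j - if j ∈ T then 1 else 0) * c := by
    intro j
    by_cases hj : j ∈ T
    · simp only [hj, if_true]
      nlinarith [hTc j hj, ht₁ j]
    · simp only [hj, if_false]
      nlinarith [hcT j hj, ht₀ j]
  calc ∑ j, t j * β j
      ≤ ∑ j, ((if j ∈ T then β j else 0) + (t j - if j ∈ T then 1 else 0) * c) :=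
        sum_le_sum fun j _ => hterm j
    _ = ∑ i ∈ T, β i := by
        rw [sum_add_distrib, ← sum_mul, sum_sub_distrib, ht, sum_ite_mem, sum_ite_mem]
        simp

theorem Finset.exists_card_eq_sum_mul_le (β : ι → ℝ) {t : ι → ℝ}
    (ht₀ : ∀ j, 0 ≤ t j) (ht₁ : ∀ j, t j ≤ 1) {k : ℕ} (ht : ∑ j, t j = k) :
    ∃ T : Finset ι, #T = k ∧ ∑ j, t j * β j ≤ ∑ i ∈ T, β i := by
  have hk : k ≤ Fintype.card ι := by
    have : (k : ℝ) ≤ Fintype.card ι := by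
      simpa [← ht] using sum_le_sum fun j (_ : j ∈ univ) => ht₁ j
    exact_mod_cast this
  obtain ⟨T, hTk, c, hTc, hcT⟩ := exists_card_eq_threshold β hk
  exact ⟨T, hTk, sum_mul_le_sum_of_threshold hTc hcT ht₀ ht₁ (hTk ▸ ht)⟩

end Threshold

theorem sum_le_kMaxSum {N : ℕ} (x : Fin N → ℝ) (T : Finset (Fin N)) :
    ∑ i ∈ T, x i ≤ kMaxSum x #T :=
  le_csSup ((Set.toFinite _).image _).bddAbove ⟨T, rfl, rfl⟩

theorem kMaxSum_le {N : ℕ} {x : Fin N → ℝ} {k : ℕ} (hk : k ≤ N) {c : ℝ}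
    (h : ∀ T : Finset (Fin N), #T = k → ∑ i ∈ T, x i ≤ c) : kMaxSum x k ≤ c := by
  obtain ⟨T, -, hT⟩ := exists_subset_card_eq (s := (univ : Finset (Fin N))) (by simpa using hk)
  exact csSup_le ⟨_, T, hT, rfl⟩ fun _ ⟨T, hT, hsum⟩ => hsum ▸ h T hT

section Hadamard

variable {n α : Type*}

theorem Matrix.trace_transpose_hadamard_mul [Fintype n] [CommSemiring α] (A P B : Matrix n n α) :
    ((Aᵀ ⊙ P) * B).trace = (P * (A ⊙ B)).trace := by
  simp only [trace, diag, mul_apply, hadamard_apply, transpose_apply]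
  exact sum_congr rfl fun i _ => sum_congr rfl fun j _ => by ring

theorem Matrix.trace_hadamard_of_diag_eq_one [Fintype n] [Semiring α] {A : Matrix n n α}
    (hA : ∀ j, A j j = 1) (B : Matrix n n α) : (A ⊙ B).trace = B.trace := by
  simp [trace, hA]

theorem Matrix.hadamard_one_sub_of_diag_eq_one [DecidableEq n] [Ring α] {A : Matrix n n α}
    (hA : ∀ j, A j j = 1) (P : Matrix n n α) : A ⊙ (1 - P) = 1 - A ⊙ P := by
  ext i j
  by_cases hij : i = j
  · subst hij
    simp [hA]
  · simp [one_apply_ne hij]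

end Hadamard

section KyFan

variable {𝕜 n : Type*} [RCLike 𝕜]

theorem Matrix.PosSemidef.re_diag_mem_Icc [DecidableEq n] {Y : Matrix n n 𝕜} (hY : Y.PosSemidef)
    (hY₁ : (1 - Y).PosSemidef) (j : n) : RCLike.re (Y j j) ∈ Set.Icc 0 1 := by
  have h₀ := (RCLike.nonneg_iff.mp (hY.diag_nonneg (i := j))).1
  have h₁ := (RCLike.nonneg_iff.mp (hY₁.diag_nonneg (i := j))).1
  simp only [sub_apply, one_apply_eq, map_sub, RCLike.one_re, sub_nonneg] at h₁
  exact ⟨h₀, h₁⟩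

theorem Matrix.PosSemidef.one_sub_star_mul_mul [Fintype n] [DecidableEq n] {X : Matrix n n 𝕜}
    (hX₁ : (1 - X).PosSemidef) {U : Matrix n n 𝕜} (hU : star U * U = 1) :
    (1 - star U * X * U).PosSemidef := by
  have : 1 - star U * X * U = star U * (1 - X) * U := by rw [mul_sub, sub_mul, mul_one, hU]
  rw [this]
  simpa [star_eq_conjTranspose] using hX₁.conjTranspose_mul_mul_same U

namespace Matrix.IsHermitian

variable [Fintype n] [DecidableEq n] {B : Matrix n n 𝕜}

theorem trace_mul_eq_sum (hB : B.IsHermitian) (X : Matrix n n 𝕜) :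
    (X * B).trace = ∑ j, (star (hB.eigenvectorUnitary : Matrix n n 𝕜) * X *
      hB.eigenvectorUnitary) j j * hB.eigenvalues j := by
  conv_lhs => rw [hB.spectral_theorem, Unitary.conjStarAlgAut_apply]
  rw [← mul_assoc, ← mul_assoc, trace_mul_cycle, ← mul_assoc]
  simp [trace, mul_diagonal]

theorem exists_card_eq_re_trace_mul_le (hB : B.IsHermitian) {X : Matrix n n 𝕜}
    (hX : X.PosSemidef) (hX₁ : (1 - X).PosSemidef) {k : ℕ} (hk : X.trace = k) :
    ∃ T : Finset n, #T = k ∧ RCLike.re (X * B).trace ≤ ∑ i ∈ T, hB.eigenvalues i := by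
  set U : Matrix n n 𝕜 := (hB.eigenvectorUnitary : Matrix n n 𝕜)
  set Y := star U * X * U
  have hY : ∀ j, RCLike.re (Y j j) ∈ Set.Icc 0 1 := by
    refine PosSemidef.re_diag_mem_Icc ?_ (hX₁.one_sub_star_mul_mul ?_)
    · simpa [Y, star_eq_conjTranspose] using hX.conjTranspose_mul_mul_same U
    · exact Unitary.star_mul_self_of_mem hB.eigenvectorUnitary.2
  have hYk : ∑ j, RCLike.re (Y j j) = k := by
    have : Y.trace = k := by
      rw [trace_mul_cycle, Unitary.mul_star_self_of_mem hB.eigenvectorUnitary.2, one_mul, hk]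
    simpa [trace] using congrArg RCLike.re this
  simpa [hB.trace_mul_eq_sum, RCLike.re_mul_ofReal] using
    exists_card_eq_sum_mul_le hB.eigenvalues (fun j => (hY j).1) (fun j => (hY j).2) hYk

theorem exists_posSemidef_trace_mul_eq_sum (hB : B.IsHermitian) (T : Finset n) :
    ∃ P : Matrix n n 𝕜, P.PosSemidef ∧ (1 - P).PosSemidef ∧ P.trace = #T ∧
      (P * B).trace = ∑ i ∈ T, (hB.eigenvalues i : 𝕜) := by
  set U : Matrix n n 𝕜 := (hB.eigenvectorUnitary : Matrix n n 𝕜)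
  have hU : star U * U = 1 := Unitary.star_mul_self_of_mem hB.eigenvectorUnitary.2
  have hU' : star (star U) * star U = 1 := by
    rw [star_star]
    exact Unitary.mul_star_self_of_mem hB.eigenvectorUnitary.2
  set D : Matrix n n 𝕜 := diagonal fun i => if i ∈ T then 1 else 0
  have hD : D.PosSemidef := PosSemidef.diagonal fun i => by by_cases hi : i ∈ T <;> simp [hi]
  have hD₁ : (1 - D).PosSemidef := by
    rw [← diagonal_one, diagonal_sub]
    exact PosSemidef.diagonal fun i => by by_cases hi : i ∈ T <;> simp [hi]
  refine ⟨U * D * star U, ?_, by simpa using hD₁.one_sub_star_mul_mul hU', ?_, ?_⟩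
  · simpa [star_eq_conjTranspose] using hD.mul_mul_conjTranspose_same U
  · rw [trace_mul_cycle, hU, one_mul, trace_diagonal, sum_boole]
    simp
  · have hUDU : star U * (U * D * star U) * U = D := by
      simp only [← mul_assoc, hU, one_mul]
      rw [mul_assoc, hU, mul_one]
    rw [hB.trace_mul_eq_sum, hUDU]
    simp [D, ite_mul, sum_ite_mem]

end Matrix.IsHermitian

end KyFan

/-- **Bapat–Sunder Hadamard majorization lemma.**  If `A` and `B` are Hermitian
`N × N` matrices, `A` is positive semidefinite and every diagonal entry of `A`
equals `1`, then `λ(A ∘ B) ≺ λ(B)`. -/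
theorem bapat_sunder_hadamard_majorization {N : ℕ}
    (A B : Matrix (Fin N) (Fin N) ℂ)
    (hA : A.PosSemidef)
    (hAdiag : ∀ j, A j j = 1)
    (hB : B.IsHermitian)
    (hAB : (Matrix.hadamard A B).IsHermitian) :
    MajorizedBy hAB.eigenvalues hB.eigenvalues := by
  refine ⟨fun k hk => kMaxSum_le hk fun T hT => ?_, ?_⟩
  · obtain ⟨P, hP, hP₁, hPtr, hPAB⟩ := hAB.exists_posSemidef_trace_mul_eq_sum T
    have hAtdiag : ∀ j, Aᵀ j j = 1 := hAdiag
    have hX : (Aᵀ ⊙ P).PosSemidef := hA.transpose.hadamard hP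
    have hX₁ : (1 - Aᵀ ⊙ P).PosSemidef := by
      rw [← hadamard_one_sub_of_diag_eq_one hAtdiag]
      exact hA.transpose.hadamard hP₁
    have hXtr : (Aᵀ ⊙ P).trace = k := by
      rw [trace_hadamard_of_diag_eq_one hAtdiag, hPtr, hT]
    obtain ⟨S, hS, hle⟩ := hB.exists_card_eq_re_trace_mul_le hX hX₁ hXtr
    calc ∑ i ∈ T, hAB.eigenvalues i = RCLike.re ((Aᵀ ⊙ P) * B).trace := by
          rw [trace_transpose_hadamard_mul, hPAB]
          simp
      _ ≤ ∑ i ∈ S, hB.eigenvalues i := hle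
      _ ≤ kMaxSum hB.eigenvalues k := hS ▸ sum_le_kMaxSum _ S
  · have htr := hAB.trace_eq_sum_eigenvalues.symm.trans
      ((trace_hadamard_of_diag_eq_one hAdiag B).trans hB.trace_eq_sum_eigenvalues)
    simpa using congrArg Complex.re htr
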